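/- arXiv:2001.11204 — 4 statements merged into one kernel-verified Lean document; each statement's English description precedes it below -/
import Mathlib

section
/- Let m ≥ 2 be an integer and suppose statement A(m) holds. Then for every pair of reals ε > 0 and λ > 2/m, there exists P > 0 such that f_λ(p) < (m+1+ε)·p for all primes p ∈ D_λ with p > P. -/
/-- The set of natural numbers generated by `A` under addition (containing `0`). -/
def NSgen (A : Set ℕ) : Set ℕ := (AddSubmonoid.closure A : Set ℕ)

/-- `S` is a numerical semigroup: additively closed, contains `0`,
has finite complement in `ℕ`, and `S ≠ ℕ`. -/
def IsNumSgrp (S : Set ℕ) : Prop :=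
  0 ∈ S ∧ (∀ a ∈ S, ∀ b ∈ S, a + b ∈ S) ∧ Sᶜ.Finite ∧ S ≠ Set.univ

/-- The Frobenius number: the largest natural number not in `S`. -/
noncomputable def NSfrob (S : Set ℕ) : ℕ := sSup Sᶜ

/-- The genus: the number of gaps of `S`. -/
noncomputable def NSgenus (S : Set ℕ) : ℕ := Sᶜ.ncard

/-- The multiplicity: the least positive element of `S`. -/
noncomputable def NSmult (S : Set ℕ) : ℕ := sInf {n | n ∈ S ∧ n ≠ 0}

/-- The atoms (minimal generators) of `S`: the set `S* \ (S* + S*)` where `S* = S \ {0}`. -/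
def NSatoms (S : Set ℕ) : Set ℕ :=
  {n | n ∈ S ∧ n ≠ 0 ∧ ¬ ∃ a, a ∈ S ∧ a ≠ 0 ∧ ∃ b, b ∈ S ∧ b ≠ 0 ∧ n = a + b}

/-- The embedding dimension: the number of atoms of `S`. -/
noncomputable def NSembdim (S : Set ℕ) : ℕ := (NSatoms S).ncard

/-- The primes in the interval `I_lam(p) = [p, p + lam*p]`. -/
def primesIn (lam : ℝ) (p : ℕ) : Set ℕ :=
  {q | q.Prime ∧ p ≤ q ∧ (q : ℝ) ≤ p + lam * p}

/-- `S_lam(p)`: the numerical semigroup generated by the primes in `[p, p + lam*p]`. -/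
def Slam (lam : ℝ) (p : ℕ) : Set ℕ := NSgen (primesIn lam p)

/-- `D_lam`: the primes `p` such that `[p, p + lam*p]` contains at least two primes. -/
def Dlam (lam : ℝ) : Set ℕ :=
  {p | p.Prime ∧ ∃ q ∈ primesIn lam p, ∃ r ∈ primesIn lam p, q ≠ r}

/-- `f_lam(p)`: the Frobenius number of `S_lam(p)`. -/
noncomputable def flam (lam : ℝ) (p : ℕ) : ℕ := NSfrob (Slam lam p)

/-- `p_n`, the `n`-th prime in natural order (`nthPrime 1 = 2`). -/
noncomputable def nthPrime (n : ℕ) : ℕ := Nat.nth Nat.Prime (n - 1)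

/-- `S_n`: the numerical semigroup generated by all primes `≥ p_n`. -/
noncomputable def Sn (n : ℕ) : Set ℕ := NSgen {q | q.Prime ∧ nthPrime n ≤ q}

/-- `f_n`: the Frobenius number of `S_n`. -/
noncomputable def fn (n : ℕ) : ℕ := NSfrob (Sn n)

/-- `S(p)`: the numerical semigroup generated by the primes in `[p, 2p]`. -/
def Sp (p : ℕ) : Set ℕ := NSgen {q | q.Prime ∧ p ≤ q ∧ q ≤ 2 * p}

/-- Statement `A(m)`: large `N` of the same parity as `m` are sums of `m` almost equal primes. -/
def Astmt (m : ℕ) : Prop :=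
  ∀ δ : ℝ, 0 < δ → ∃ N₀ : ℕ, 0 < N₀ ∧ ∀ N : ℕ, N₀ ≤ N → N % 2 = m % 2 →
    ∃ q : Fin m → ℕ, (∀ i, (q i).Prime) ∧ (∑ i, q i) = N ∧
      ∀ i, |(N : ℝ) / m - q i| < δ * N

/-- `T(m)`: positive integers `t` such that `1+tm`, `3+tm` and `1+t(m+2)` are all prime. -/
def Tset (m : ℕ) : Set ℕ :=
  {t | 0 < t ∧ (1 + t * m).Prime ∧ (3 + t * m).Prime ∧ (1 + t * (m + 2)).Prime}

set_option maxHeartbeats 1000000 in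
theorem statement5 (m : ℕ) (hm : 2 ≤ m) (hA : Astmt m) (ε lam : ℝ)
    (hε : 0 < ε) (hlam : 2 / (m : ℝ) < lam) :
    ∃ P : ℝ, 0 < P ∧ ∀ p ∈ Dlam lam, P < (p : ℝ) →
      (flam lam p : ℝ) < ((m : ℝ) + 1 + ε) * p := by
  have hmR : (2:ℝ) ≤ (m:ℝ) := by exact_mod_cast hm
  have hm0 : (0:ℝ) < m := by linarith
  have hlam0 : 0 < lam := lt_trans (div_pos two_pos hm0) hlam
  have hml : 2 < (m:ℝ) * lam := by
    have h := (div_lt_iff₀ hm0).mp hlam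
    nlinarith
  set η : ℝ := min (ε / (m:ℝ)) (((m:ℝ) * lam - 2) / ((m:ℝ) * (2 + lam))) / 2 with hetadef
  have hd1 : 0 < ε / (m:ℝ) := div_pos hε hm0
  have hd2 : 0 < ((m:ℝ) * lam - 2) / ((m:ℝ) * (2 + lam)) :=
    div_pos (by linarith) (by positivity)
  have hη0 : 0 < η := div_pos (lt_min hd1 hd2) two_pos
  have hηε : (m:ℝ) * η ≤ ε / 2 := by
    have h1 : η ≤ (ε / (m:ℝ)) / 2 := by
      rw [hetadef]
      have := min_le_left (ε / (m:ℝ)) (((m:ℝ) * lam - 2) / ((m:ℝ) * (2 + lam)))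
      linarith
    calc (m:ℝ) * η ≤ (m:ℝ) * ((ε / (m:ℝ)) / 2) := by nlinarith
      _ = ε / 2 := by field_simp
  have hηl : η * ((m:ℝ) * (2 + lam)) * 2 ≤ (m:ℝ) * lam - 2 := by
    have h1 : η ≤ (((m:ℝ) * lam - 2) / ((m:ℝ) * (2 + lam))) / 2 := by
      rw [hetadef]
      have := min_le_right (ε / (m:ℝ)) (((m:ℝ) * lam - 2) / ((m:ℝ) * (2 + lam)))
      linarith
    have h2 : (0:ℝ) < (m:ℝ) * (2 + lam) := by positivity
    rw [div_div] at h1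
    have := (le_div_iff₀ (by positivity)).mp h1
    nlinarith
  have hη1 : η ≤ 1 := by
    have h2 : (0:ℝ) < (m:ℝ) * (2 + lam) := by positivity
    nlinarith
  set δ : ℝ := η / (2 * (m:ℝ)) with hddef
  have hδ0 : 0 < δ := by positivity
  obtain ⟨N₀, hN₀pos, hA'⟩ := hA δ hδ0
  have hml2 : (0:ℝ) < (m:ℝ) * lam - 2 := by linarith
  refine ⟨(N₀:ℝ) + 3 + 2/ε + 2/((m:ℝ)*lam - 2), by positivity, ?_⟩
  intro p hp hPp
  have hεinv : (0:ℝ) < 2/ε := by positivity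
  have hmlinv : (0:ℝ) < 2/((m:ℝ)*lam - 2) := by positivity
  have hN₀0 : (0:ℝ) ≤ (N₀:ℝ) := Nat.cast_nonneg _
  have h3p : (3:ℝ) < p := by linarith
  have hN₀p : (N₀:ℝ) < p := by linarith
  have hεp : 2/ε < p := by linarith
  have hmlp : 2/((m:ℝ)*lam - 2) < p := by linarith
  have hp0R : (0:ℝ) < p := by linarith
  have hp3 : 3 < p := by exact_mod_cast h3p
  have hpprime : p.Prime := hp.1
  have hodd : p % 2 = 1 := hpprime.eq_two_or_odd.resolve_left (by omega)
  set a : ℝ := (m:ℝ) * p * (1 + η) with hadef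
  set b : ℝ := (m:ℝ) * (1 + lam) * p * (1 - η) with hbdef
  have hba : a + 2*p + 1 ≤ b := by
    have h1 : 2 < (p:ℝ) * ((m:ℝ)*lam - 2) := (div_lt_iff₀ hml2).mp hmlp
    have h2 : η * ((m:ℝ) * (2 + lam)) * 2 * p ≤ ((m:ℝ) * lam - 2) * p :=
      mul_le_mul_of_nonneg_right hηl hp0R.le
    rw [hadef, hbdef]
    nlinarith [h1, h2]
  have hpmem : p ∈ AddSubmonoid.closure (primesIn lam p) := by
    apply AddSubmonoid.subset_closure
    refine ⟨hpprime, le_refl p, ?_⟩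
    have : 0 ≤ lam * (p:ℝ) := mul_nonneg hlam0.le hp0R.le
    linarith
  have key : ∀ N : ℕ, a ≤ (N:ℝ) → (N:ℝ) ≤ b → N % 2 = m % 2 →
      N ∈ AddSubmonoid.closure (primesIn lam p) := by
    intro N haN hbN hpar
    have hN₀N : N₀ ≤ N := by
      have h0 : (0:ℝ) ≤ (m:ℝ)*p*η := by positivity
      have h : (N₀:ℝ) < N := by nlinarith [h0, hp0R, hN₀p, haN, hmR]
      exact_mod_cast h.le
    obtain ⟨q, hq, hsum, hclose⟩ := hA' N hN₀N hpar
    rw [← hsum]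
    refine AddSubmonoid.sum_mem _ (fun i _ => AddSubmonoid.subset_closure ?_)
    have hi := hclose i
    rw [abs_lt] at hi
    obtain ⟨hi1, hi2⟩ := hi
    have hdm : (N:ℝ)/(m:ℝ) * (m:ℝ) = N := div_mul_cancel₀ _ (ne_of_gt hm0)
    have hdN : δ * (N:ℝ) * (m:ℝ) = (η/2) * N := by
      rw [hddef]; field_simp
    have hiL : (N:ℝ) - (q i) * m < (η/2) * N := by
      have h := mul_lt_mul_of_pos_right hi2 hm0
      rw [sub_mul, hdm, hdN] at h
      linarith
    have hiU : (q i : ℝ) * m - N < (η/2) * N := by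
      have h := mul_lt_mul_of_pos_right (neg_lt_of_neg_lt hi1) hm0
      rw [neg_sub, sub_mul, hdm, hdN] at h
      linarith
    refine ⟨hq i, ?_, ?_⟩
    · have hq1 : (p:ℝ) ≤ q i := by
        have h1 : ((m:ℝ)*p*(1+η)) * (1 - η/2) ≤ (N:ℝ)*(1 - η/2) :=
          mul_le_mul_of_nonneg_right haN (by linarith)
        nlinarith [mul_nonneg (mul_nonneg hm0.le hp0R.le) hη0.le]
      exact_mod_cast hq1
    · have h2 : (N:ℝ)*(1 + η/2) ≤ ((m:ℝ)*(1+lam)*p*(1-η)) * (1 + η/2) :=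
        mul_le_mul_of_nonneg_right hbN (by linarith)
      have h3 : (0:ℝ) ≤ (m:ℝ) * (1+lam) * p := by positivity
      nlinarith [mul_nonneg h3 hη0.le]
  have cover1 : ∀ n : ℕ, a ≤ (n:ℝ) → n % 2 = m % 2 →
      n ∈ AddSubmonoid.closure (primesIn lam p) := by
    intro n
    induction n using Nat.strong_induction_on with
    | _ n ih =>
      intro han hpar
      by_cases hnb : (n:ℝ) ≤ b
      · exact key n han hnb hpar
      · push_neg at hnb
        have h2pn : 2*p ≤ n := by
          have h : ((2*p:ℕ):ℝ) ≤ n := by push_cast; nlinarith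
          exact_mod_cast h
        have hcast : ((n - 2*p : ℕ):ℝ) = (n:ℝ) - 2*p := by
          push_cast [h2pn]; ring
        have h1 : a ≤ ((n - 2*p:ℕ):ℝ) := by rw [hcast]; linarith
        have hpar2 : (n - 2*p) % 2 = m % 2 := by omega
        have hmem := ih (n - 2*p) (by omega) h1 hpar2
        have heq : n = (n - 2*p) + p + p := by omega
        rw [heq]
        exact add_mem (add_mem hmem hpmem) hpmem
  have cover2 : ∀ n : ℕ, a + p ≤ (n:ℝ) →
      n ∈ AddSubmonoid.closure (primesIn lam p) := by
    intro n hn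
    have ha0 : (0:ℝ) ≤ a := by positivity
    by_cases hpar : n % 2 = m % 2
    · exact cover1 n (by linarith) hpar
    · have hpn : p ≤ n := by
        have h : (p:ℝ) ≤ n := by linarith
        exact_mod_cast h
      have hcast : ((n - p : ℕ):ℝ) = (n:ℝ) - p := by push_cast [hpn]; ring
      have h1 : a ≤ ((n - p:ℕ):ℝ) := by rw [hcast]; linarith
      have hpar2 : (n - p) % 2 = m % 2 := by omega
      have hmem := cover1 (n - p) h1 hpar2
      have heq : n = (n - p) + p := by omega
      rw [heq]
      exact add_mem hmem hpmem
  have ha0 : (0:ℝ) ≤ a + p := by positivity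
  have hub : Nat.ceil (a + p) ∈ upperBounds ((Slam lam p)ᶜ) := by
    intro x hx
    by_contra hxx
    push_neg at hxx
    apply hx
    show x ∈ AddSubmonoid.closure (primesIn lam p)
    apply cover2
    have h1 : a + p ≤ (Nat.ceil (a+p) : ℝ) := Nat.le_ceil _
    have h2 : ((Nat.ceil (a+p) : ℕ):ℝ) < x := by exact_mod_cast hxx
    linarith
  have hf : flam lam p ≤ Nat.ceil (a + p) := by
    unfold flam NSfrob
    exact csSup_le' hub
  have hfR : (flam lam p : ℝ) ≤ (Nat.ceil (a + p) : ℝ) := by exact_mod_cast hf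
  have hceil : (Nat.ceil (a + p) : ℝ) < a + p + 1 := Nat.ceil_lt_add_one ha0
  have hfin : a + p + 1 < ((m:ℝ) + 1 + ε) * p := by
    have h1 : 2 < (p:ℝ) * ε := (div_lt_iff₀ hε).mp hεp
    have h2 : (m:ℝ) * η * p ≤ (ε/2) * p := mul_le_mul_of_nonneg_right hηε hp0R.le
    rw [hadef]
    nlinarith
  linarith
end

section
/- For every real λ > 0 and every prime p ∈ D_λ, f_λ(p)/p ≥ 3 − 6/p, i.e., f_λ(p) ≥ 3p − 6. -/
/-!
Two distinct primes `q, r` of the interval are coprime, so by the Chicken McNugget theorem every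
integer beyond `qr - q - r` lies in `S_λ(p)`; hence `f_λ(p)` is an honest maximum of the gaps.
For odd `p`, all generators are odd and at least `p`, so an element of `S_λ(p)` below `3p` is `0`,
a single prime, or an even sum of two generators. Thus `3p - 6`, odd and divisible by `3`, is a gap
when `p ≥ 5`, and `4` is a gap when `p = 3`.
-/

theorem bddAbove_compl_closure_of_coprime {s : Set ℕ} {m n : ℕ} (hm : m ∈ s) (hn : n ∈ s)
    (hmn : m.Coprime n) (hm1 : 1 < m) (hn1 : 1 < n) :
    BddAbove (AddSubmonoid.closure s : Set ℕ)ᶜ := by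
  refine ⟨m * n - m - n, fun k hk => ?_⟩
  by_contra! hlt
  have hpair := ((frobeniusNumber_iff.mp (frobeniusNumber_pair hmn hm1 hn1)).2 k hlt)
  exact hk (AddSubmonoid.closure_mono
    (Set.insert_subset hm (Set.singleton_subset_iff.mpr hn)) hpair)

theorem mem_closure_of_lt_three_mul {A : Set ℕ} {p n : ℕ} (hA : ∀ a ∈ A, Odd a ∧ p ≤ a)
    (hn : n ∈ AddSubmonoid.closure A) (hlt : n < 3 * p) :
    n = 0 ∨ n ∈ A ∨ (Even n ∧ 2 * p ≤ n) := by
  induction hn using AddSubmonoid.closure_induction with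
  | mem a ha => exact Or.inr (Or.inl ha)
  | zero => exact Or.inl rfl
  | add a b _ _ iha ihb =>
    rcases iha (by omega) with rfl | ha | ⟨hae, ha⟩
    · simpa using ihb (by omega)
    · rcases ihb (by omega) with rfl | hb | ⟨-, hb⟩
      · simpa using Or.inr (Or.inl ha)
      · have := (hA a ha).2; have := (hA b hb).2
        exact Or.inr (Or.inr ⟨(hA a ha).1.add_odd (hA b hb).1, by omega⟩)
      · have := (hA a ha).2; omega
    · rcases ihb (by omega) with rfl | hb | ⟨-, hb⟩
      · simpa using Or.inr (Or.inr ⟨hae, ha⟩)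
      · have := (hA b hb).2; omega
      · omega

theorem notMem_closure_of_lt_three_mul {A : Set ℕ} {p g : ℕ} (hA : ∀ a ∈ A, Odd a ∧ p ≤ a)
    (hg0 : g ≠ 0) (hgA : g ∉ A) (hg : Odd g ∨ g < 2 * p) (hlt : g < 3 * p) :
    g ∉ AddSubmonoid.closure A := fun hmem => by
  rcases mem_closure_of_lt_three_mul hA hmem hlt with h | h | ⟨hev, hle⟩
  · exact hg0 h
  · exact hgA h
  · rcases hg with hodd | hsmall
    · exact (Nat.not_even_iff_odd.mpr hodd) hev
    · omega

theorem three_mul_le_sSup_compl_closure_add_six {A : Set ℕ} {p : ℕ} (hp : p.Prime)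
    (hA : ∀ a ∈ A, a.Prime ∧ p ≤ a) (hbdd : BddAbove (AddSubmonoid.closure A : Set ℕ)ᶜ) :
    3 * p ≤ sSup (AddSubmonoid.closure A : Set ℕ)ᶜ + 6 := by
  rcases hp.eq_two_or_odd' with rfl | hodd
  · omega
  have hp3 : 3 ≤ p := by
    have := hp.two_le; obtain ⟨k, rfl⟩ := hodd
    omega
  have hA' : ∀ a ∈ A, Odd a ∧ p ≤ a := fun a ha =>
    ⟨(hA a ha).1.odd_of_ne_two (by have := (hA a ha).2; omega), (hA a ha).2⟩
  rcases eq_or_ne p 3 with rfl | hp_ne3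
  · have hgap : 4 ∉ AddSubmonoid.closure A := notMem_closure_of_lt_three_mul hA'
      (by norm_num) (fun h => absurd (hA 4 h).1 (by norm_num)) (by omega) (by omega)
    have := le_csSup hbdd hgap
    omega
  · have hp5 : 5 ≤ p := by
      obtain ⟨k, rfl⟩ := hodd
      omega
    have hcomposite : ¬ (3 * p - 6).Prime := fun h => by
      rcases h.eq_one_or_self_of_dvd 3 ⟨p - 2, by omega⟩ with h' | h' <;> omega
    have hgap : 3 * p - 6 ∉ AddSubmonoid.closure A :=
      notMem_closure_of_lt_three_mul hA' (by omega) (fun h => hcomposite (hA _ h).1)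
        (Or.inl (by obtain ⟨k, rfl⟩ := hodd; exact ⟨3 * k - 2, by omega⟩)) (by omega)
    have := le_csSup hbdd hgap
    omega

theorem statement10_general (lam : ℝ) (p : ℕ) (hp : p ∈ Dlam lam) :
    (3 : ℝ) - 6 / p ≤ (flam lam p : ℝ) / p := by
  obtain ⟨hpp, q, hq, r, hr, hqr⟩ := hp
  have hbdd : BddAbove (Slam lam p)ᶜ := bddAbove_compl_closure_of_coprime hq hr
    ((Nat.coprime_primes hq.1 hr.1).2 hqr) hq.1.one_lt hr.1.one_lt
  have key : 3 * p ≤ flam lam p + 6 :=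
    three_mul_le_sSup_compl_closure_add_six hpp (fun a ha => ⟨ha.1, ha.2.1⟩) hbdd
  rw [sub_le_iff_le_add, ← add_div, le_div_iff₀ (by exact_mod_cast hpp.pos)]
  exact_mod_cast key

theorem statement10 (lam : ℝ) (hlam : 0 < lam) (p : ℕ) (hp : p ∈ Dlam lam) :
    (3 : ℝ) - 6 / p ≤ (flam lam p : ℝ) / p :=
  statement10_general lam p hp
end

section
/- Let m ≥ 2 be an integer with m ≢ 1 mod 3 and set λ = 2/m. Then for all sufficiently large primes p ∈ D_λ, f_λ(p)/p ≥ m + 2 − 2/p, i.e., f_λ(p) ≥ (m+2)p − 2. -/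
/-!
Write `N = (m + 2) p`; the primes of `I_λ(p)` are exactly the primes `q ≥ p` with `m q ≤ N`, all
odd. Counting and parity force a representation of `N + 2` to have `m + 2` summands, hence one
summand `p + 2`, so `p ≡ 2 (mod 3)`. A representation of `N - 2` has `m` summands, each in
`[N/m - 2, N/m)` (the right end is excluded because `p ∤ m q`), so all summands are one odd prime
`a` and `m a + 2 = N`, which is impossible mod 3 when `m ≢ 1`. Hence `N - 2` or `N + 2` is a gap.
-/

namespace Multiset

lemma sum_mod_two_of_forall_odd {l : Multiset ℕ} (h : ∀ q ∈ l, q % 2 = 1) :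
    l.sum % 2 = card l % 2 := by
  induction l using Multiset.induction_on with
  | empty => simp
  | cons a s ih =>
    have ha := h a (mem_cons_self a s)
    have hs := ih fun q hq => h q (mem_cons_of_mem hq)
    simp only [sum_cons, card_cons]
    omega

lemma mul_sum_le_card_mul {l : Multiset ℕ} {m c : ℕ} (h : ∀ q ∈ l, m * q ≤ c) :
    m * l.sum ≤ card l * c := by
  calc m * l.sum = (l.map (m * ·)).sum := by rw [sum_map_mul_left, map_id']
    _ ≤ card (l.map (m * ·)) • c := sum_le_card_nsmul _ _ (by simpa using h)
    _ = card l * c := by simp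

lemma card_mul_le_sum {l : Multiset ℕ} {p : ℕ} (h : ∀ q ∈ l, p ≤ q) : card l * p ≤ l.sum := by
  simpa using card_nsmul_le_sum h

end Multiset

open Multiset

lemma Nat.Prime.mod_three_ne_zero {p : ℕ} (hp : p.Prime) (h3 : p ≠ 3) : p % 3 ≠ 0 := fun h =>
  h3 ((hp.eq_one_or_self_of_dvd 3 (Nat.dvd_of_mod_eq_zero h)).resolve_left (by norm_num)).symm

lemma Nat.Prime.mod_three_eq_two_of_prime_add_two {p : ℕ} (hp : p.Prime) (hp2 : (p + 2).Prime)
    (h3 : p ≠ 3) : p % 3 = 2 := by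
  have := hp.two_le
  have := hp.mod_three_ne_zero h3
  have := hp2.mod_three_ne_zero (by omega)
  omega

lemma mul_add_two_ne_add_two_mul_of_mod_three {m p a : ℕ} (hm : m % 3 ≠ 1) (hp : p % 3 = 2)
    (ha : a % 3 ≠ 0) : m * a + 2 ≠ (m + 2) * p := by
  intro h
  have h' : (m * a + 2) % 3 = (m + 2) * p % 3 := by rw [h]
  rw [Nat.add_mod, Nat.mul_mod, Nat.mul_mod (m + 2), Nat.add_mod m, hp] at h'
  have : m % 3 < 3 := Nat.mod_lt _ (by norm_num)
  have : a % 3 < 3 := Nat.mod_lt _ (by norm_num)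
  interval_cases m % 3 <;> interval_cases a % 3 <;> simp_all

lemma mul_ne_add_two_mul_of_prime {m p q : ℕ} (hm : 0 < m) (hmp : m < p) (hp : p.Prime)
    (hq : q.Prime) : m * q ≠ (m + 2) * p := by
  intro h
  have hpq : p ∣ q := (hp.dvd_mul.mp ⟨m + 2, by rw [h, mul_comm]⟩).resolve_left
    fun hpm => absurd (Nat.le_of_dvd hm hpm) (by omega)
  rw [(Nat.prime_dvd_prime_iff_eq hp hq).mp hpq] at h
  nlinarith [hq.pos]

section Window

variable {m p : ℕ} {l : Multiset ℕ}

lemma card_eq_of_sum_eq_add_two (hm : 0 < m) (hp : 2 < p) (hpodd : p % 2 = 1)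
    (hodd : ∀ q ∈ l, q % 2 = 1) (hlow : ∀ q ∈ l, p ≤ q) (hhigh : ∀ q ∈ l, m * q ≤ (m + 2) * p)
    (hsum : l.sum = (m + 2) * p + 2) : card l = m + 2 := by
  have hlb := card_mul_le_sum hlow
  have hub := mul_sum_le_card_mul hhigh
  have hpar := sum_mod_two_of_forall_odd hodd
  rw [hsum] at hlb hub hpar
  have hle : card l ≤ m + 2 := by
    by_contra! h
    nlinarith
  have hgt : m < card l := by
    by_contra! h
    nlinarith [Nat.mul_le_mul_right ((m + 2) * p) h]
  have hN : (m + 2) * p % 2 = m % 2 := by simp [Nat.mul_mod, hpodd]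
  omega

lemma card_eq_of_sum_add_two_eq (hp : 1 < p) (hpodd : p % 2 = 1)
    (hodd : ∀ q ∈ l, q % 2 = 1) (hlow : ∀ q ∈ l, p ≤ q) (hhigh : ∀ q ∈ l, m * q ≤ (m + 2) * p)
    (hsum : l.sum + 2 = (m + 2) * p) : card l = m := by
  have hlb := card_mul_le_sum hlow
  have hub := mul_sum_le_card_mul hhigh
  have hpar := sum_mod_two_of_forall_odd hodd
  have hN : (m + 2) * p % 2 = m % 2 := by simp [Nat.mul_mod, hpodd]
  have hlt : card l < m + 2 := by
    by_contra! h
    nlinarith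
  have hge : m ≤ card l := by
    by_contra! h
    have : card l + 2 ≤ m := by omega
    nlinarith [Nat.mul_le_mul_right ((m + 2) * p) this]
  omega

lemma add_two_mem_of_sum_eq (hpodd : p % 2 = 1) (hodd : ∀ q ∈ l, q % 2 = 1)
    (hlow : ∀ q ∈ l, p ≤ q) (hsum : l.sum = card l * p + 2) : p + 2 ∈ l := by
  obtain ⟨q, hq, hqp⟩ : ∃ q ∈ l, q ≠ p := by
    by_contra! h
    rw [eq_replicate_card.mpr h, sum_replicate, card_replicate, smul_eq_mul] at hsum
    omega
  obtain ⟨t, rfl⟩ := exists_cons_of_mem hq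
  have ht := card_mul_le_sum fun r hr => hlow r (mem_cons_of_mem hr)
  simp only [sum_cons, card_cons] at hsum
  have := hodd q hq
  have := hlow q hq
  have hq' : q = p + 2 := by
    have : q ≤ p + 2 := by nlinarith
    omega
  exact hq' ▸ mem_cons_self q t

lemma le_mul_add_of_sum_add_two_eq {N q : ℕ} (hhigh : ∀ r ∈ l, m * r ≤ N) (hcard : card l = m)
    (hsum : l.sum + 2 = N) (hq : q ∈ l) : N ≤ m * q + 2 * m := by
  obtain ⟨t, rfl⟩ := exists_cons_of_mem hq
  have ht := mul_sum_le_card_mul fun r hr => hhigh r (mem_cons_of_mem hr)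
  simp only [sum_cons, card_cons] at hcard hsum
  subst hcard hsum
  nlinarith

lemma eq_of_mem_of_sum_add_two_eq {N q r : ℕ} (hodd : ∀ q ∈ l, q % 2 = 1)
    (hhigh : ∀ q ∈ l, m * q < N) (hcard : card l = m) (hsum : l.sum + 2 = N)
    (hq : q ∈ l) (hr : r ∈ l) : q = r := by
  have hle : ∀ q ∈ l, m * q ≤ N := fun q hq => (hhigh q hq).le
  have hqr : q < r + 2 := Nat.lt_of_mul_lt_mul_left <|
    (hhigh q hq).trans_le (by linarith [le_mul_add_of_sum_add_two_eq hle hcard hsum hr])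
  have hrq : r < q + 2 := Nat.lt_of_mul_lt_mul_left <|
    (hhigh r hr).trans_le (by linarith [le_mul_add_of_sum_add_two_eq hle hcard hsum hq])
  have := hodd q hq
  have := hodd r hr
  omega

end Window

lemma mem_primesIn_two_div_iff {m p q : ℕ} (hm : 0 < m) :
    q ∈ primesIn (2 / (m : ℝ)) p ↔ q.Prime ∧ p ≤ q ∧ m * q ≤ (m + 2) * p := by
  have hm' : (0 : ℝ) < m := by exact_mod_cast hm
  have : (q : ℝ) ≤ p + 2 / m * p ↔ m * q ≤ (m + 2) * p := by
    rw [← mul_le_mul_iff_of_pos_left hm', ← Nat.cast_le (α := ℝ)]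
    push_cast
    rw [show (m : ℝ) * (p + 2 / m * p) = (m + 2) * p by field_simp]
  simp only [primesIn, Set.mem_ofPred_eq, this]

section SemigroupSlam

variable {m p : ℕ}

lemma exists_multiset_of_mem_Slam {n : ℕ} (hm : 0 < m) (hp : 2 < p)
    (h : n ∈ Slam (2 / (m : ℝ)) p) :
    ∃ l : Multiset ℕ, l.sum = n ∧ ∀ q ∈ l, q.Prime ∧ q % 2 = 1 ∧ p ≤ q ∧ m * q ≤ (m + 2) * p := by
  obtain ⟨l, hl, rfl⟩ := AddSubmonoid.exists_multiset_of_mem_closure h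
  refine ⟨l, rfl, fun q hq => ?_⟩
  obtain ⟨hq, hpq, hqm⟩ := (mem_primesIn_two_div_iff hm).mp (hl q hq)
  exact ⟨hq, hq.mod_two_eq_one_iff_ne_two.mpr (by omega), hpq, hqm⟩

lemma mod_three_eq_two_of_add_two_mem_Slam (hm : 0 < m) (hp : p.Prime) (h5 : 5 ≤ p)
    (h : (m + 2) * p + 2 ∈ Slam (2 / (m : ℝ)) p) : p % 3 = 2 := by
  obtain ⟨l, hsum, hl⟩ := exists_multiset_of_mem_Slam hm (by omega) h
  have hpodd : p % 2 = 1 := hp.mod_two_eq_one_iff_ne_two.mpr (by omega)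
  have hcard := card_eq_of_sum_eq_add_two hm (by omega) hpodd (fun q hq => (hl q hq).2.1)
    (fun q hq => (hl q hq).2.2.1) (fun q hq => (hl q hq).2.2.2) hsum
  have hmem := add_two_mem_of_sum_eq hpodd (fun q hq => (hl q hq).2.1)
    (fun q hq => (hl q hq).2.2.1) (by rw [hsum, hcard])
  exact hp.mod_three_eq_two_of_prime_add_two (hl _ hmem).1 (by omega)

lemma sub_two_not_mem_Slam (hm : 0 < m) (hm3 : m % 3 ≠ 1) (hp : p.Prime) (h5 : 5 ≤ p)
    (hmp : m < p) (hp3 : p % 3 = 2) : (m + 2) * p - 2 ∉ Slam (2 / (m : ℝ)) p := by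
  intro h
  obtain ⟨l, hsum, hl⟩ := exists_multiset_of_mem_Slam hm (by omega) h
  replace hsum : l.sum + 2 = (m + 2) * p := by
    rw [hsum, Nat.sub_add_cancel (by nlinarith)]
  have hpodd : p % 2 = 1 := hp.mod_two_eq_one_iff_ne_two.mpr (by omega)
  have hcard := card_eq_of_sum_add_two_eq (by omega) hpodd (fun q hq => (hl q hq).2.1)
    (fun q hq => (hl q hq).2.2.1) (fun q hq => (hl q hq).2.2.2) hsum
  have hlt : ∀ q ∈ l, m * q < (m + 2) * p := fun q hq =>
    lt_of_le_of_ne (hl q hq).2.2.2 (mul_ne_add_two_mul_of_prime hm hmp hp (hl q hq).1)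
  obtain ⟨a, ha⟩ := card_pos_iff_exists_mem.mp (hcard ▸ hm)
  have hrep : l = replicate m a := eq_replicate.mpr ⟨hcard, fun q hq =>
    eq_of_mem_of_sum_add_two_eq (fun q hq => (hl q hq).2.1) hlt hcard hsum hq ha⟩
  rw [hrep, sum_replicate, smul_eq_mul] at hsum
  exact mul_add_two_ne_add_two_mul_of_mod_three hm3 hp3
    ((hl a ha).1.mod_three_ne_zero (by have := (hl a ha).2.2.1; omega)) hsum

end SemigroupSlam

lemma bddAbove_compl_Slam {lam : ℝ} {p : ℕ} (hp : p ∈ Dlam lam) : BddAbove (Slam lam p)ᶜ := by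
  obtain ⟨-, q, hq, r, hr, hqr⟩ := hp
  have hfrob := frobeniusNumber_pair ((Nat.coprime_primes hq.1 hr.1).mpr hqr)
    hq.1.one_lt hr.1.one_lt
  refine ⟨q * r - q - r, fun n hn => hfrob.2 fun hmem => hn ?_⟩
  refine AddSubmonoid.closure_mono ?_ hmem
  rintro x (rfl | rfl)
  exacts [hq, hr]

lemma le_flam_of_not_mem {lam : ℝ} {p n : ℕ} (hp : p ∈ Dlam lam) (hn : n ∉ Slam lam p) :
    n ≤ flam lam p :=
  le_csSup (bddAbove_compl_Slam hp) hn

theorem statement11 (m : ℕ) (hm : 2 ≤ m) (h3 : m % 3 ≠ 1) :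
    ∃ P : ℕ, ∀ p ∈ Dlam (2 / (m : ℝ)), P ≤ p →
      (m : ℝ) + 2 - 2 / p ≤ (flam (2 / (m : ℝ)) p : ℝ) / p := by
  refine ⟨m + 5, fun p hpD hP => ?_⟩
  have hp := hpD.1
  have hgap : (m + 2) * p - 2 ≤ flam (2 / (m : ℝ)) p := by
    by_cases hN : (m + 2) * p - 2 ∈ Slam (2 / (m : ℝ)) p
    · have hN' : (m + 2) * p + 2 ∉ Slam (2 / (m : ℝ)) p := fun h =>
        sub_two_not_mem_Slam (by omega) h3 hp (by omega) (by omega)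
          (mod_three_eq_two_of_add_two_mem_Slam (by omega) hp (by omega) h) hN
      exact (Nat.sub_le _ _).trans ((Nat.le_add_right _ _).trans (le_flam_of_not_mem hpD hN'))
    · exact le_flam_of_not_mem hpD hN
  have hp0 : (0 : ℝ) < p := by exact_mod_cast hp.pos
  have h2 : 2 ≤ (m + 2) * p := by nlinarith
  rw [le_div_iff₀ hp0]
  calc ((m : ℝ) + 2 - 2 / p) * p = (((m + 2) * p - 2 : ℕ) : ℝ) := by
        rw [Nat.cast_sub h2]; push_cast; field_simp
    _ ≤ flam (2 / (m : ℝ)) p := by exact_mod_cast hgap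
end

section
/- T(2) = {1}, and T(m) is empty for every integer m > 2 with m ≢ 1 mod 3. -/
/-! When `m ≢ 1 (mod 3)`, one of `1 + tm`, `3 + tm`, `1 + t(m + 2)` is divisible by 3 for every `t`,
so for `t ∈ T(m)` that prime is 3 itself; for `t > 0` this is possible only if `m = 2` and `t = 1`. -/

theorem three_dvd_of_mod_three_ne_one {m : ℕ} (hm : m % 3 ≠ 1) (t : ℕ) :
    3 ∣ 1 + t * m ∨ 3 ∣ 3 + t * m ∨ 3 ∣ 1 + t * (m + 2) := by
  have residues : ∀ a b : ZMod 3, b ≠ 1 →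
      1 + a * b = 0 ∨ 3 + a * b = 0 ∨ 1 + a * (b + 2) = 0 := by decide
  have hm' : (m : ZMod 3) ≠ 1 := by
    rw [← Nat.cast_one, Ne, ZMod.natCast_eq_natCast_iff']
    exact hm
  simp only [← ZMod.natCast_eq_zero_iff]
  push_cast
  exact residues t m hm'

theorem eq_three_of_mem_Tset {m t : ℕ} (hm : m % 3 ≠ 1) (ht : t ∈ Tset m) :
    1 + t * m = 3 ∨ 3 + t * m = 3 ∨ 1 + t * (m + 2) = 3 := by
  obtain ⟨-, h₁, h₃, h₅⟩ := ht
  have eq_of_dvd {p : ℕ} (hp : p.Prime) (h : 3 ∣ p) : p = 3 :=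
    ((Nat.prime_dvd_prime_iff_eq Nat.prime_three hp).mp h).symm
  rcases three_dvd_of_mod_three_ne_one hm t with h | h | h
  exacts [Or.inl (eq_of_dvd h₁ h), Or.inr (Or.inl (eq_of_dvd h₃ h)),
    Or.inr (Or.inr (eq_of_dvd h₅ h))]

theorem statement14 :
    Tset 2 = {1} ∧ ∀ m : ℕ, 2 < m → m % 3 ≠ 1 → Tset m = ∅ := by
  refine ⟨Set.eq_singleton_iff_unique_mem.mpr ⟨?_, fun t ht => ?_⟩,
    fun m hm hm₃ => Set.eq_empty_of_forall_notMem fun t ht => ?_⟩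
  · exact ⟨one_pos, by norm_num, by norm_num, by norm_num⟩
  · have ht₀ := ht.1
    rcases eq_three_of_mem_Tset (by norm_num) ht with h | h | h <;> omega
  · have ht₀ := ht.1
    rcases eq_three_of_mem_Tset hm₃ ht with h | h | h <;> nlinarith
end
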